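/- arXiv:0710.3623 — 2 statements merged into one kernel-verified Lean document; each statement's English description precedes it below -/
import Mathlib

section
/- Let Ω ⊆ ℝ² be open and connected, γ > 1, and let (m, p, ρ) be a C¹ solution of the steady full Euler equations on Ω with ρ > 0, p > 0, and m nowhere equal to the zero vector. If both the entropy quantity p/ρ^γ and the Bernoulli quantity |m|²/(2ρ²) + γp/((γ−1)ρ) are constant functions on Ω, then the velocity u = m/ρ is irrotational, i.e. ∂₂(m₁/ρ) − ∂₁(m₂/ρ) = 0 on Ω. -/
open Set
open scoped ENNReal NNReal

noncomputable section

abbrev E2 : Type := EuclideanSpace ℝ (Fin 2)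

/-- The point `(a, b)` of the Euclidean plane. -/
def pt (a b : ℝ) : E2 := (WithLp.equiv 2 (Fin 2 → ℝ)).symm ![a, b]

/-- Partial derivative in the `i`-th coordinate direction. -/
def pd (i : Fin 2) (f : E2 → ℝ) : E2 → ℝ :=
  fun x => fderiv ℝ f x (EuclideanSpace.single i 1)

/-- Iterated mixed partial derivative `∂₁^{k₁} ∂₂^{k₂} f`. -/
def Dmix (k₁ k₂ : ℕ) (f : E2 → ℝ) : E2 → ℝ := (pd 0)^[k₁] ((pd 1)^[k₂] f)

/-- The steady full Euler equations on `Ω`: conservation of mass, the two momentum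
equations, and conservation of energy, with `E = |m|²/(2ρ²) + p/((γ-1)ρ)`. -/
def EulerEqs (γ : ℝ) (Ω : Set E2) (m₁ m₂ p ρ : E2 → ℝ) : Prop :=
  ∀ x ∈ Ω,
    pd 0 m₁ x + pd 1 m₂ x = 0 ∧
    pd 0 (fun y => m₁ y ^ 2 / ρ y) x + pd 1 (fun y => m₁ y * m₂ y / ρ y) x + pd 0 p x = 0 ∧
    pd 0 (fun y => m₁ y * m₂ y / ρ y) x + pd 1 (fun y => m₂ y ^ 2 / ρ y) x + pd 1 p x = 0 ∧
    pd 0 (fun y => m₁ y *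
        ((m₁ y ^ 2 + m₂ y ^ 2) / (2 * ρ y ^ 2) + p y / ((γ - 1) * ρ y) + p y / ρ y)) x +
      pd 1 (fun y => m₂ y *
        ((m₁ y ^ 2 + m₂ y ^ 2) / (2 * ρ y ^ 2) + p y / ((γ - 1) * ρ y) + p y / ρ y)) x = 0

/-! The velocity `u = m/ρ` satisfies `(u·∇)u = ∇(|u|²/2) + ω (u₂, -u₁)` with
`ω = ∂₂u₁ - ∂₁u₂`, so by mass conservation the momentum equations read
`ω (u₂, -u₁) = -∇(|u|²/2) - ∇p/ρ` (Crocco). For an isentropic flow `∇p/ρ` is the gradient of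
the enthalpy `γp/((γ-1)ρ)`, so the right-hand side is minus the gradient of the Bernoulli
quantity, which vanishes. Hence `ω (u₂, -u₁) = 0`, and `ω = 0` since `u` never vanishes. -/

section PartialDerivatives

variable {f g h : E2 → ℝ} {x : E2} {i : Fin 2}

lemma pd_add (hf : DifferentiableAt ℝ f x) (hg : DifferentiableAt ℝ g x) :
    pd i (fun y => f y + g y) x = pd i f x + pd i g x := by
  simp [pd, fderiv_fun_add hf hg]

lemma pd_mul (hf : DifferentiableAt ℝ f x) (hg : DifferentiableAt ℝ g x) :
    pd i (fun y => f y * g y) x = pd i f x * g x + f x * pd i g x := by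
  simp only [pd, fderiv_fun_mul hf hg, add_apply, smul_apply, smul_eq_mul]
  ring

lemma pd_const_mul (hf : DifferentiableAt ℝ f x) (c : ℝ) :
    pd i (fun y => c * f y) x = c * pd i f x := by
  simp [pd, fderiv_const_mul hf]

lemma pd_sq (hf : DifferentiableAt ℝ f x) :
    pd i (fun y => f y ^ 2) x = 2 * f x * pd i f x := by
  simp only [sq, pd_mul hf hf]
  ring

lemma pd_div (hf : DifferentiableAt ℝ f x) (hg : DifferentiableAt ℝ g x) (hgx : g x ≠ 0) :
    pd i (fun y => f y / g y) x = (pd i f x * g x - f x * pd i g x) / g x ^ 2 := by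
  have hinv : HasFDerivAt (fun y => (g y)⁻¹) ((-(g x ^ 2)⁻¹) • fderiv ℝ g x) x :=
    (hasDerivAt_inv hgx).comp_hasFDerivAt x hg.hasFDerivAt
  have hdiv : HasFDerivAt (fun y => f y / g y)
      (f x • ((-(g x ^ 2)⁻¹) • fderiv ℝ g x) + (g x)⁻¹ • fderiv ℝ f x) x := by
    simpa only [div_eq_mul_inv] using hf.hasFDerivAt.fun_mul hinv
  simp only [pd, hdiv.fderiv, add_apply, smul_apply, smul_eq_mul]
  field_simp
  ring

lemma pd_mul_div (hf : DifferentiableAt ℝ f x) (hg : DifferentiableAt ℝ g x)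
    (hh : DifferentiableAt ℝ h x) (hhx : h x ≠ 0) :
    pd i (fun y => f y * g y / h y) x =
      ((pd i f x * g x + f x * pd i g x) * h x - f x * g x * pd i h x) / h x ^ 2 := by
  rw [pd_div (hf.fun_mul hg) hh hhx, pd_mul hf hg]

lemma pd_rpow_const (γ : ℝ) (hf : DifferentiableAt ℝ f x) (hfx : f x ≠ 0) :
    pd i (fun y => f y ^ γ) x = γ * f x ^ (γ - 1) * pd i f x := by
  simp [pd, (hf.hasFDerivAt.rpow_const (p := γ) (Or.inl hfx)).fderiv, mul_assoc]

lemma pd_eq_zero_of_const_on {Ω : Set E2} (hΩ : IsOpen Ω) (hx : x ∈ Ω) {c : ℝ}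
    (hf : ∀ y ∈ Ω, f y = c) : pd i f x = 0 := by
  have hfc : f =ᶠ[nhds x] fun _ => c := Filter.eventually_of_mem (hΩ.mem_nhds hx) hf
  simp [pd, hfc.fderiv_eq]

end PartialDerivatives

section EulerFlow

variable {γ : ℝ} {m₁ m₂ p ρ : E2 → ℝ} {x : E2} {i : Fin 2}

lemma pd_mul_eq_of_div_rpow_const_on {Ω : Set E2} (hΩ : IsOpen Ω) (hx : x ∈ Ω) {c : ℝ}
    (hent : ∀ y ∈ Ω, p y / ρ y ^ γ = c) (hp : DifferentiableAt ℝ p x)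
    (hρ : DifferentiableAt ℝ ρ x) (hρx : 0 < ρ x) :
    pd i p x * ρ x = γ * p x * pd i ρ x := by
  have hργ : ρ x ^ γ = ρ x ^ (γ - 1) * ρ x := by
    rw [← Real.rpow_add_one hρx.ne']
    norm_num
  have hρ' : 0 < ρ x ^ (γ - 1) := Real.rpow_pos_of_pos hρx _
  have h0 := pd_eq_zero_of_const_on (i := i) hΩ hx hent
  rw [pd_div hp (hρ.rpow_const (Or.inl hρx.ne')) (by positivity),
    pd_rpow_const γ hρ hρx.ne', hργ, div_eq_zero_iff] at h0
  refine mul_left_cancel₀ hρ'.ne' ?_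
  linear_combination h0.resolve_right (by positivity)

lemma pd_enthalpy_of_isentropic (hγ : γ ≠ 1) (hp : DifferentiableAt ℝ p x)
    (hρ : DifferentiableAt ℝ ρ x) (hρx : ρ x ≠ 0)
    (hent : pd i p x * ρ x = γ * p x * pd i ρ x) :
    pd i (fun y => γ * p y / ((γ - 1) * ρ y)) x = pd i p x / ρ x := by
  have hγ' : γ - 1 ≠ 0 := sub_ne_zero.mpr hγ
  rw [pd_div (hp.const_mul γ) (hρ.const_mul (γ - 1)) (mul_ne_zero hγ' hρx),
    pd_const_mul hp, pd_const_mul hρ, div_eq_div_iff (by positivity) hρx]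
  linear_combination (γ - 1) * ρ x * hent

lemma pd_kinetic_energy (hm₁ : DifferentiableAt ℝ m₁ x) (hm₂ : DifferentiableAt ℝ m₂ x)
    (hρ : DifferentiableAt ℝ ρ x) (hρx : ρ x ≠ 0) :
    pd i (fun y => (m₁ y ^ 2 + m₂ y ^ 2) / (2 * ρ y ^ 2)) x =
      ((m₁ x * pd i m₁ x + m₂ x * pd i m₂ x) * ρ x - (m₁ x ^ 2 + m₂ x ^ 2) * pd i ρ x) /
        ρ x ^ 3 := by
  rw [pd_div ((hm₁.fun_pow 2).fun_add (hm₂.fun_pow 2)) ((hρ.fun_pow 2).const_mul 2)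
      (by positivity), pd_add (hm₁.fun_pow 2) (hm₂.fun_pow 2), pd_sq hm₁, pd_sq hm₂,
    pd_const_mul (hρ.fun_pow 2), pd_sq hρ]
  field_simp

lemma isentropic_bernoulli_pd_eq_zero (hγ : γ ≠ 1) {Ω : Set E2} (hΩ : IsOpen Ω) (hx : x ∈ Ω)
    {c : ℝ} (hbern : ∀ y ∈ Ω,
      (m₁ y ^ 2 + m₂ y ^ 2) / (2 * ρ y ^ 2) + γ * p y / ((γ - 1) * ρ y) = c)
    (hm₁ : DifferentiableAt ℝ m₁ x) (hm₂ : DifferentiableAt ℝ m₂ x)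
    (hp : DifferentiableAt ℝ p x) (hρ : DifferentiableAt ℝ ρ x) (hρx : ρ x ≠ 0)
    (hent : pd i p x * ρ x = γ * p x * pd i ρ x) :
    (m₁ x * pd i m₁ x + m₂ x * pd i m₂ x) * ρ x - (m₁ x ^ 2 + m₂ x ^ 2) * pd i ρ x +
      pd i p x * ρ x ^ 2 = 0 := by
  have hγ' : γ - 1 ≠ 0 := sub_ne_zero.mpr hγ
  have h0 := pd_eq_zero_of_const_on (i := i) hΩ hx hbern
  rw [pd_add (by fun_prop (disch := positivity)) (by fun_prop (disch := simp [*])),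
    pd_kinetic_energy hm₁ hm₂ hρ hρx, pd_enthalpy_of_isentropic hγ hp hρ hρx hent] at h0
  field_simp at h0
  linear_combination h0

lemma curl_numerator_eq_zero_of_momentum_of_bernoulli (hm₁ : DifferentiableAt ℝ m₁ x)
    (hm₂ : DifferentiableAt ℝ m₂ x) (hρ : DifferentiableAt ℝ ρ x) (hρx : ρ x ≠ 0)
    (hstag : (m₁ x, m₂ x) ≠ (0, 0))
    (hmass : pd 0 m₁ x + pd 1 m₂ x = 0)
    (hmom₁ : pd 0 (fun y => m₁ y ^ 2 / ρ y) x + pd 1 (fun y => m₁ y * m₂ y / ρ y) x +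
      pd 0 p x = 0)
    (hmom₂ : pd 0 (fun y => m₁ y * m₂ y / ρ y) x + pd 1 (fun y => m₂ y ^ 2 / ρ y) x +
      pd 1 p x = 0)
    (hbern : ∀ i, (m₁ x * pd i m₁ x + m₂ x * pd i m₂ x) * ρ x -
      (m₁ x ^ 2 + m₂ x ^ 2) * pd i ρ x + pd i p x * ρ x ^ 2 = 0) :
    pd 1 m₁ x * ρ x - m₁ x * pd 1 ρ x - (pd 0 m₂ x * ρ x - m₂ x * pd 0 ρ x) = 0 := by
  simp only [sq, pd_mul_div hm₁ hm₁ hρ hρx, pd_mul_div hm₁ hm₂ hρ hρx,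
    pd_mul_div hm₂ hm₂ hρ hρx] at hmom₁ hmom₂
  field_simp at hmom₁ hmom₂
  set N := pd 1 m₁ x * ρ x - m₁ x * pd 1 ρ x - (pd 0 m₂ x * ρ x - m₂ x * pd 0 ρ x) with hN
  -- the components of Crocco's identity `ω (u₂, -u₁) = 0`, scaled by `ρ³`
  have h₁ : m₁ x * N = 0 := by
    linear_combination -(hmom₂ - hbern 1 - m₂ x * ρ x * hmass) + m₁ x * hN
  have h₂ : m₂ x * N = 0 := by
    linear_combination hmom₁ - hbern 0 - m₁ x * ρ x * hmass + m₂ x * hN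
  by_contra hN₀
  exact hstag (Prod.ext ((mul_eq_zero.mp h₁).resolve_right hN₀)
    ((mul_eq_zero.mp h₂).resolve_right hN₀))

end EulerFlow

theorem constant_farfield_implies_potential_general
    (γ : ℝ) (hγ : 1 < γ) (Ω : Set E2) (hΩ : IsOpen Ω)
    (m₁ m₂ p ρ : E2 → ℝ)
    (hm₁ : ContDiffOn ℝ 1 m₁ Ω) (hm₂ : ContDiffOn ℝ 1 m₂ Ω)
    (hp : ContDiffOn ℝ 1 p Ω) (hρ : ContDiffOn ℝ 1 ρ Ω)
    (hρpos : ∀ x ∈ Ω, 0 < ρ x)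
    (hstag : ∀ x ∈ Ω, (m₁ x, m₂ x) ≠ (0, 0))
    (heuler : EulerEqs γ Ω m₁ m₂ p ρ)
    (hentropy : ∃ c : ℝ, ∀ x ∈ Ω, p x / ρ x ^ γ = c)
    (hbernoulli : ∃ c : ℝ, ∀ x ∈ Ω,
      (m₁ x ^ 2 + m₂ x ^ 2) / (2 * ρ x ^ 2) + γ * p x / ((γ - 1) * ρ x) = c) :
    ∀ x ∈ Ω, pd 1 (fun y => m₁ y / ρ y) x - pd 0 (fun y => m₂ y / ρ y) x = 0 := by
  obtain ⟨ce, hce⟩ := hentropy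
  obtain ⟨cb, hcb⟩ := hbernoulli
  intro x hx
  have hd {f : E2 → ℝ} (hf : ContDiffOn ℝ 1 f Ω) : DifferentiableAt ℝ f x :=
    (hf.differentiableOn one_ne_zero).differentiableAt (hΩ.mem_nhds hx)
  have hρx : ρ x ≠ 0 := (hρpos x hx).ne'
  have hent (i : Fin 2) : pd i p x * ρ x = γ * p x * pd i ρ x :=
    pd_mul_eq_of_div_rpow_const_on hΩ hx hce (hd hp) (hd hρ) (hρpos x hx)
  have hbern (i : Fin 2) := isentropic_bernoulli_pd_eq_zero hγ.ne' hΩ hx hcb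
    (hd hm₁) (hd hm₂) (hd hp) (hd hρ) hρx (hent i)
  obtain ⟨hmass, hmom₁, hmom₂, -⟩ := heuler x hx
  rw [pd_div (hd hm₁) (hd hρ) hρx, pd_div (hd hm₂) (hd hρ) hρx, div_sub_div_same,
    curl_numerator_eq_zero_of_momentum_of_bernoulli (hd hm₁) (hd hm₂) (hd hρ) hρx
      (hstag x hx) hmass hmom₁ hmom₂ hbern, zero_div]

/-- Proposition 3.1 of the paper. If a `C¹` Euler flow with no
stagnation points has constant entropy `p/ρ^γ` and constant Bernoulli quantity
`|m|²/(2ρ²) + γp/((γ-1)ρ)` on a connected open set `Ω`, then the velocity `u = m/ρ`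
is irrotational. -/
theorem constant_farfield_implies_potential
    (γ : ℝ) (hγ : 1 < γ) (Ω : Set E2) (hΩ : IsOpen Ω) (hconn : IsConnected Ω)
    (m₁ m₂ p ρ : E2 → ℝ)
    (hm₁ : ContDiffOn ℝ 1 m₁ Ω) (hm₂ : ContDiffOn ℝ 1 m₂ Ω)
    (hp : ContDiffOn ℝ 1 p Ω) (hρ : ContDiffOn ℝ 1 ρ Ω)
    (hρpos : ∀ x ∈ Ω, 0 < ρ x) (hppos : ∀ x ∈ Ω, 0 < p x)
    (hstag : ∀ x ∈ Ω, (m₁ x, m₂ x) ≠ (0, 0))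
    (heuler : EulerEqs γ Ω m₁ m₂ p ρ)
    (hentropy : ∃ c : ℝ, ∀ x ∈ Ω, p x / ρ x ^ γ = c)
    (hbernoulli : ∃ c : ℝ, ∀ x ∈ Ω,
      (m₁ x ^ 2 + m₂ x ^ 2) / (2 * ρ x ^ 2) + γ * p x / ((γ - 1) * ρ x) = c) :
    ∀ x ∈ Ω, pd 1 (fun y => m₁ y / ρ y) x - pd 0 (fun y => m₂ y / ρ y) x = 0 :=
  constant_farfield_implies_potential_general γ hγ Ω hΩ m₁ m₂ p ρ hm₁ hm₂ hp hρ hρpos hstag heuler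
    hentropy hbernoulli
end
end

section
/- Let a, b ∈ ℝ and define, on the open set H = {x = (x₁,x₂) ∈ ℝ² : x₂ > −1}, the function v(x) = r^{−a}(x₂+1)^{b}, where r = √(x₁² + (x₂+1)²). Then v is smooth on H and its Laplacian is Δv = (a² − 2ab) r^{−a−2}(x₂+1)^{b} + b(b−1) r^{−a}(x₂+1)^{b−2}. In particular, for a = α + β and b = α with 0 < β < α < 1, one has Δv = (β² − α²) r^{−α−β−2}(x₂+1)^{α} − α(1−α) r^{−α−β}(x₂+1)^{α−2} ≤ −α(1−α) r^{−α−β}(x₂+1)^{α−2} on H. -/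
open Set
open scoped ENNReal NNReal

noncomputable section

/-- `r = √(x₁² + (x₂+1)²)`, the distance to the point `(0,-1)`. -/
def barrierR (x : E2) : ℝ := Real.sqrt (x 0 ^ 2 + (x 1 + 1) ^ 2)

/-- The barrier function `v(x) = r^{-a}(x₂+1)^b` on the half plane `{x₂ > -1}`. -/
def barrierV (a b : ℝ) (x : E2) : ℝ := barrierR x ^ (-a) * (x 1 + 1) ^ b

namespace BarrierAux

def sOf (x : E2) : ℝ := x 0 ^ 2 + (x 1 + 1) ^ 2
def wOf (x : E2) : ℝ := x 1 + 1
def Fpq (p q : ℝ) (x : E2) : ℝ := sOf x ^ p * wOf x ^ q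
def A0 (p q : ℝ) (x : E2) : ℝ := 2 * p * x 0 * (sOf x ^ (p - 1) * wOf x ^ q)
def A1 (p q : ℝ) (x : E2) : ℝ :=
  2 * p * (sOf x ^ (p - 1) * wOf x ^ (q + 1)) + q * (sOf x ^ p * wOf x ^ (q - 1))

lemma sOf_pos {x : E2} (hx : 0 < wOf x) : 0 < sOf x := by
  have h2 : 0 < (x 1 + 1) ^ 2 := pow_pos hx 2
  have := sq_nonneg (x 0)
  unfold sOf; nlinarith

abbrev P0 : E2 →L[ℝ] ℝ := EuclideanSpace.proj (0 : Fin 2)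
abbrev P1 : E2 →L[ℝ] ℝ := EuclideanSpace.proj (1 : Fin 2)

lemma h0' (x : E2) : HasFDerivAt (fun y : E2 => y 0) P0 x := P0.hasFDerivAt
lemma h1' (x : E2) : HasFDerivAt (fun y : E2 => y 1 + 1) P1 x := P1.hasFDerivAt.add_const 1

lemma hasFDerivAt_Fpq (p q : ℝ) {x : E2} (hx : 0 < wOf x) :
    HasFDerivAt (Fpq p q) ((A0 p q x) • P0 + (A1 p q x) • P1) x := by
  have hs := sOf_pos hx
  have hsd : HasFDerivAt sOf ((2 * x 0) • P0 + (2 * wOf x) • P1) x := by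
    have h1 : HasFDerivAt (fun y : E2 => y 0 ^ 2) ((x 0) • P0 + (x 0) • P0) x := by
      have := (h0' x).mul (h0' x)
      convert this using 2 <;> first | rfl | (simp only [Pi.mul_apply]; ring) | ring
    have h2 : HasFDerivAt (fun y : E2 => (y 1 + 1) ^ 2)
        ((wOf x) • P1 + (wOf x) • P1) x := by
      have := (h1' x).mul (h1' x)
      convert this using 2 <;> first | rfl | (simp only [Pi.mul_apply]; ring) | ring
    have := h1.add h2
    refine this.congr_fderiv ?_
    ext y
    simp [wOf, mul_comm, two_mul]
    ring
  have hFs : HasFDerivAt (fun y : E2 => sOf y ^ p)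
      ((p * sOf x ^ (p - 1)) • ((2 * x 0) • P0 + (2 * wOf x) • P1)) x :=
    hsd.rpow_const (Or.inl hs.ne')
  have hFw : HasFDerivAt (fun y : E2 => wOf y ^ q)
      ((q * wOf x ^ (q - 1)) • P1) x := (h1' x).rpow_const (Or.inl hx.ne')
  have hF := hFs.mul hFw
  have hq1 : wOf x ^ (q + 1) = wOf x ^ q * wOf x := by
    rw [Real.rpow_add_one hx.ne']
  refine hF.congr_fderiv ?_
  ext y
  simp [A0, A1, hq1, mul_comm, mul_add]
  ring

lemma single_vals :
    P0 (EuclideanSpace.single (0 : Fin 2) (1:ℝ)) = 1 ∧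
    P1 (EuclideanSpace.single (0 : Fin 2) (1:ℝ)) = 0 ∧
    P0 (EuclideanSpace.single (1 : Fin 2) (1:ℝ)) = 0 ∧
    P1 (EuclideanSpace.single (1 : Fin 2) (1:ℝ)) = 1 := by
  refine ⟨?_, ?_, ?_, ?_⟩ <;> simp [EuclideanSpace.single_apply]

end BarrierAux

namespace BarrierAux

lemma pd0_Fpq (p q : ℝ) {x : E2} (hx : 0 < wOf x) : pd 0 (Fpq p q) x = A0 p q x := by
  unfold pd
  rw [(hasFDerivAt_Fpq p q hx).fderiv]
  simp [EuclideanSpace.single_apply]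

lemma pd1_Fpq (p q : ℝ) {x : E2} (hx : 0 < wOf x) : pd 1 (Fpq p q) x = A1 p q x := by
  unfold pd
  rw [(hasFDerivAt_Fpq p q hx).fderiv]
  simp [EuclideanSpace.single_apply]

lemma isOpen_H : IsOpen {y : E2 | 0 < wOf y} := by
  have : Continuous wOf := by
    have : Continuous fun y : E2 => P1 y + 1 := P1.continuous.add continuous_const
    exact this
  exact isOpen_lt continuous_const this

lemma pd00 (p q : ℝ) {x : E2} (hx : 0 < wOf x) :
    pd 0 (pd 0 (Fpq p q)) x = 2 * p * (x 0 * A0 (p - 1) q x + Fpq (p - 1) q x) := by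
  have heq : pd 0 (Fpq p q) =ᶠ[nhds x] A0 p q := by
    filter_upwards [isOpen_H.mem_nhds hx] with y hy using pd0_Fpq p q hy
  have hA0 : HasFDerivAt (A0 p q)
      ((2 * p) • ((x 0) • ((A0 (p-1) q x) • P0 + (A1 (p-1) q x) • P1)
        + (Fpq (p-1) q x) • P0)) x := by
    have h := ((h0' x).mul (hasFDerivAt_Fpq (p-1) q hx)).const_mul (2*p)
    have hfun : A0 p q = fun y => (2*p) * (y 0 * Fpq (p-1) q y) := by
      funext y; unfold A0 Fpq; ring
    rw [hfun]; exact h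
  rw [show pd 0 (pd 0 (Fpq p q)) x
      = (fderiv ℝ (pd 0 (Fpq p q)) x) (EuclideanSpace.single 0 1) from rfl,
    heq.fderiv_eq, hA0.fderiv]
  simp [EuclideanSpace.single_apply]
  ring

lemma pd11 (p q : ℝ) {x : E2} (hx : 0 < wOf x) :
    pd 1 (pd 1 (Fpq p q)) x = 2 * p * A1 (p - 1) (q + 1) x + q * A1 p (q - 1) x := by
  have heq : pd 1 (Fpq p q) =ᶠ[nhds x] A1 p q := by
    filter_upwards [isOpen_H.mem_nhds hx] with y hy using pd1_Fpq p q hy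
  have hA1 : HasFDerivAt (A1 p q)
      ((2 * p) • ((A0 (p-1) (q+1) x) • P0 + (A1 (p-1) (q+1) x) • P1)
        + q • ((A0 p (q-1) x) • P0 + (A1 p (q-1) x) • P1)) x := by
    have h := ((hasFDerivAt_Fpq (p-1) (q+1) hx).const_mul (2*p)).add
      ((hasFDerivAt_Fpq p (q-1) hx).const_mul q)
    have hfun : A1 p q = fun y => (2*p) * Fpq (p-1) (q+1) y + q * Fpq p (q-1) y := by
      funext y; unfold A1 Fpq; ring
    rw [hfun]; exact h
  rw [show pd 1 (pd 1 (Fpq p q)) x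
      = (fderiv ℝ (pd 1 (Fpq p q)) x) (EuclideanSpace.single 1 1) from rfl,
    heq.fderiv_eq, hA1.fderiv]
  simp [EuclideanSpace.single_apply]

end BarrierAux

namespace BarrierAux

lemma lap (p q : ℝ) {x : E2} (hx : 0 < wOf x) :
    pd 0 (pd 0 (Fpq p q)) x + pd 1 (pd 1 (Fpq p q)) x =
      (4*p^2 + 4*p*q) * (sOf x ^ (p-1) * wOf x ^ q)
        + q*(q-1) * (sOf x ^ p * wOf x ^ (q-2)) := by
  have hs := sOf_pos hx
  rw [pd00 p q hx, pd11 p q hx]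
  unfold A0 A1 Fpq
  set s := sOf x with hsdef
  set w := wOf x with hwdef
  rw [show q+1-1 = q from by ring, show q-1+1 = q from by ring,
    show q+1+1 = q+2 from by ring, show p-1-1 = p-2 from by ring,
    show q-1-1 = q-2 from by ring]
  have e1 : s ^ (p-1) = s ^ (p-2) * s := by
    have h := Real.rpow_add_one hs.ne' (p-2)
    rw [show p-2+1 = p-1 from by ring] at h; exact h
  have e2 : s ^ p = s ^ (p-2) * s * s := by
    have h := Real.rpow_add_one hs.ne' (p-1)
    rw [show p-1+1 = p from by ring] at h; rw [h, e1]
  have e3 : w ^ q = w ^ (q-2) * w * w := by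
    have h1 := Real.rpow_add_one hx.ne' (q-2)
    rw [show q-2+1 = q-1 from by ring] at h1
    have h2 := Real.rpow_add_one hx.ne' (q-1)
    rw [show q-1+1 = q from by ring] at h2
    rw [h2, h1]
  have e4 : w ^ (q+2) = w ^ (q-2) * w * w * w * w := by
    have h1 := Real.rpow_add_one hx.ne' q
    have h2 := Real.rpow_add_one hx.ne' (q+1)
    rw [show q+1+1 = q+2 from by ring] at h2
    rw [h2, h1, e3]
  have hx0 : x 0 ^ 2 = s - w^2 := by
    rw [hsdef, hwdef]; unfold sOf wOf; ring
  rw [e1, e2, e3, e4]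
  linear_combination (4*p*(p-1) * (s^(p-2)) * (w^(q-2)) * w^2) * hx0

lemma rpowR (x : E2) (t : ℝ) : barrierR x ^ t = sOf x ^ (t/2) := by
  have hs0 : (0:ℝ) ≤ sOf x := by unfold sOf; positivity
  unfold barrierR
  rw [show (x 0 ^ 2 + (x 1 + 1) ^ 2) = sOf x from rfl, Real.sqrt_eq_rpow,
    ← Real.rpow_mul hs0, show 1/2*t = t/2 from by ring]

lemma barrierV_eq (a b : ℝ) : barrierV a b = Fpq (-(a/2)) b := by
  funext x
  unfold barrierV Fpq wOf
  rw [rpowR, show -a/2 = -(a/2) from by ring]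

end BarrierAux

open BarrierAux in
lemma barrier_key (a b : ℝ) (x : E2) (hx : -1 < x 1) :
    pd 0 (pd 0 (barrierV a b)) x + pd 1 (pd 1 (barrierV a b)) x =
      (a ^ 2 - 2 * a * b) * barrierR x ^ (-a - 2) * (x 1 + 1) ^ b +
        b * (b - 1) * barrierR x ^ (-a) * (x 1 + 1) ^ (b - 2) := by
  have hw : 0 < wOf x := by unfold wOf; linarith
  rw [barrierV_eq a b, lap (-(a/2)) b hw, rpowR, rpowR,
    show (-a - 2)/2 = -(a/2) - 1 from by ring, show (-a)/2 = -(a/2) from by ring]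
  unfold wOf
  ring

open BarrierAux in
lemma barrier_smooth (a b : ℝ) :
    ContDiffOn ℝ (⊤ : ℕ∞) (barrierV a b) {x : E2 | -1 < x 1} := by
  rw [barrierV_eq]
  intro x hx
  have hw : 0 < wOf x := by unfold wOf; simp only [Set.mem_setOf_eq] at hx; linarith
  have hs := sOf_pos hw
  apply ContDiffAt.contDiffWithinAt
  have hsC : ContDiffAt ℝ (⊤ : ℕ∞) sOf x := by
    apply ContDiff.contDiffAt
    exact (P0.contDiff.pow 2).add ((P1.contDiff.add contDiff_const).pow 2)
  have hwC : ContDiffAt ℝ (⊤ : ℕ∞) wOf x := by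
    apply ContDiff.contDiffAt
    exact P1.contDiff.add contDiff_const
  exact (hsC.rpow_const_of_ne hs.ne').mul (hwC.rpow_const_of_ne hw.ne')

/-- the comparison function (4.7) and estimate (4.8) of the paper.
On `H = {x₂ > -1}`, `v = r^{-a}(x₂+1)^b` is smooth with
`Δv = (a² - 2ab) r^{-a-2}(x₂+1)^b + b(b-1) r^{-a}(x₂+1)^{b-2}`; in particular, for
`a = α+β`, `b = α` with `0 < β < α < 1`,
`Δv = (β²-α²) r^{-α-β-2}(x₂+1)^α - α(1-α) r^{-α-β}(x₂+1)^{α-2}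
    ≤ -α(1-α) r^{-α-β}(x₂+1)^{α-2}`. -/
theorem barrier_laplacian (a b : ℝ) :
    ContDiffOn ℝ (⊤ : ℕ∞) (barrierV a b) {x : E2 | -1 < x 1} ∧
    (∀ x : E2, -1 < x 1 →
      pd 0 (pd 0 (barrierV a b)) x + pd 1 (pd 1 (barrierV a b)) x =
        (a ^ 2 - 2 * a * b) * barrierR x ^ (-a - 2) * (x 1 + 1) ^ b +
          b * (b - 1) * barrierR x ^ (-a) * (x 1 + 1) ^ (b - 2)) ∧
    ∀ α β : ℝ, 0 < β → β < α → α < 1 → a = α + β → b = α →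
      ∀ x : E2, -1 < x 1 →
        (pd 0 (pd 0 (barrierV a b)) x + pd 1 (pd 1 (barrierV a b)) x =
          (β ^ 2 - α ^ 2) * barrierR x ^ (-α - β - 2) * (x 1 + 1) ^ α -
            α * (1 - α) * barrierR x ^ (-α - β) * (x 1 + 1) ^ (α - 2)) ∧
        pd 0 (pd 0 (barrierV a b)) x + pd 1 (pd 1 (barrierV a b)) x ≤
          -(α * (1 - α)) * barrierR x ^ (-α - β) * (x 1 + 1) ^ (α - 2) := by
  refine ⟨barrier_smooth a b, fun x hx => barrier_key a b x hx, ?_⟩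
  intro α β hβ hβα hα1 ha hb x hx
  rw [ha, hb]
  have heq : pd 0 (pd 0 (barrierV (α + β) α)) x + pd 1 (pd 1 (barrierV (α + β) α)) x =
      (β ^ 2 - α ^ 2) * barrierR x ^ (-α - β - 2) * (x 1 + 1) ^ α -
        α * (1 - α) * barrierR x ^ (-α - β) * (x 1 + 1) ^ (α - 2) := by
    rw [barrier_key (α + β) α x hx,
      show -(α + β) - 2 = -α - β - 2 from by ring,
      show -(α + β) = -α - β from by ring]
    ring
  refine ⟨heq, ?_⟩
  rw [heq]
  have h1 : (0:ℝ) ≤ barrierR x ^ (-α - β - 2) := by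
    unfold barrierR; positivity
  have h2 : (0:ℝ) ≤ (x 1 + 1) ^ α := by
    have : (0:ℝ) ≤ x 1 + 1 := by linarith
    positivity
  have hba : β ^ 2 - α ^ 2 ≤ 0 := by nlinarith
  nlinarith [mul_nonpos_of_nonpos_of_nonneg hba (mul_nonneg h1 h2)]
end
end
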